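/- Fix nonnegative integers m, n with m + n ≥ 1 and (m,n) ≠ (0,1), and fix an integer k ≥ 3. Let T_k be the family of all (m,n)-mixed graphs whose underlying graph is a partial k-tree. Then T_k is optimally simply colourable: the supremum over G ∈ T_k of χ_s(G) equals the supremum over G ∈ T_k of χ(G) (as elements of ℕ ∪ {∞}). -/

import Mathlib

/-- An `(m,n)`-mixed graph on vertex type `V`: arcs (ordered pairs of distinct
vertices) coloured by `Fin m` and edges (unordered pairs of distinct vertices)
coloured by `Fin n`, with at most one adjacency between any two vertices.
`arcColor u v = some j` means there is an arc from `u` to `v` of colour `j`;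
`edgeColor u v = some i` means there is an edge between `u` and `v` of colour `i`. -/
structure MixedGraph (m n : ℕ) (V : Type) where
  arcColor : V → V → Option (Fin m)
  edgeColor : V → V → Option (Fin n)
  edge_symm : ∀ u v, edgeColor u v = edgeColor v u
  edge_irrefl : ∀ v, edgeColor v v = none
  arc_asymm : ∀ u v, (arcColor u v).isSome → arcColor v u = none
  arc_not_edge : ∀ u v, (arcColor u v).isSome → edgeColor u v = none

namespace MixedGraph

variable {m n : ℕ} {V W : Type}

/-- Adjacency in the underlying graph `U(G)`. -/
def Adj (G : MixedGraph m n V) (u v : V) : Prop :=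
  (G.arcColor u v).isSome ∨ (G.arcColor v u).isSome ∨ (G.edgeColor u v).isSome

/-- The underlying simple graph `U(G)`. -/
def underlying (G : MixedGraph m n V) : SimpleGraph V where
  Adj := G.Adj
  symm := by
    refine ⟨?_⟩
    intro u v h
    rcases h with h | h | h
    · exact Or.inr (Or.inl h)
    · exact Or.inl h
    · refine Or.inr (Or.inr ?_)
      rw [G.edge_symm]
      exact h
  loopless := by
    refine ⟨?_⟩
    intro v h
    rcases h with h | h | h
    · simp [G.arc_asymm v v h] at h
    · simp [G.arc_asymm v v h] at h
    · simp [G.edge_irrefl v] at h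

/-- `G` is complete when its underlying graph is a complete graph. -/
def IsComplete (G : MixedGraph m n V) : Prop :=
  ∀ u v : V, u ≠ v → G.Adj u v

/-- A simple homomorphism of `(m,n)`-mixed graphs: either `G` has one vertex or
`φ` is non-constant, and every arc/edge is mapped to an arc/edge of the same
colour unless its endpoints are identified. -/
def IsSimpleHom [Fintype V] (G : MixedGraph m n V) (H : MixedGraph m n W) (φ : V → W) : Prop :=
  (Fintype.card V = 1 ∨ ∃ x y : V, φ x ≠ φ y) ∧
  (∀ u v : V, ∀ j : Fin m, G.arcColor u v = some j →
      φ u = φ v ∨ H.arcColor (φ u) (φ v) = some j) ∧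
  (∀ u v : V, ∀ i : Fin n, G.edgeColor u v = some i →
      φ u = φ v ∨ H.edgeColor (φ u) (φ v) = some i)

/-- The simple chromatic number `χₛ(G)`: the least `t` such that `G` admits a
simple homomorphism to some `(m,n)`-mixed graph on `t` vertices. -/
noncomputable def simpleChrom [Fintype V] (G : MixedGraph m n V) : ℕ :=
  sInf {t : ℕ | ∃ H : MixedGraph m n (Fin t), ∃ φ : V → Fin t, G.IsSimpleHom H φ}

/-- An (ordinary) homomorphism of `(m,n)`-mixed graphs. -/
def IsHom (G : MixedGraph m n V) (H : MixedGraph m n W) (φ : V → W) : Prop :=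
  (∀ u v : V, G.Adj u v → φ u ≠ φ v) ∧
  (∀ u v : V, ∀ j : Fin m, G.arcColor u v = some j → H.arcColor (φ u) (φ v) = some j) ∧
  (∀ u v : V, ∀ i : Fin n, G.edgeColor u v = some i → H.edgeColor (φ u) (φ v) = some i)

/-- The chromatic number `χ(G)`: the least `t` such that `G` admits a
homomorphism to some `(m,n)`-mixed graph on `t` vertices. -/
noncomputable def chrom (G : MixedGraph m n V) : ℕ :=
  sInf {t : ℕ | ∃ H : MixedGraph m n (Fin t), ∃ φ : V → Fin t, G.IsHom H φ}

/-- `v` is between `u` and `w`: both `u` and `w` are adjacent to `v`, and `u`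
and `w` do not agree on `v` (the two adjacencies do not have the same type). -/
def Between (G : MixedGraph m n V) (v u w : V) : Prop :=
  G.Adj u v ∧ G.Adj w v ∧
  ¬ ((∃ i : Fin n, G.edgeColor u v = some i ∧ G.edgeColor w v = some i) ∨
     (∃ j : Fin m, G.arcColor u v = some j ∧ G.arcColor w v = some j) ∨
     (∃ j : Fin m, G.arcColor v u = some j ∧ G.arcColor v w = some j))

/-- A set of vertices is convex if no vertex outside it is between two of its
vertices. -/
def IsConvex (G : MixedGraph m n V) (C : Set V) : Prop :=
  ∀ u ∈ C, ∀ w ∈ C, ∀ v : V, G.Between v u w → v ∈ C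

/-- `conv(N)`: the smallest convex set containing `N`. -/
def conv (G : MixedGraph m n V) (N : Set V) : Set V :=
  ⋂₀ {C : Set V | G.IsConvex C ∧ N ⊆ C}

end MixedGraph

/-- `G` is a `k`-tree: it can be built from `K_{k+1}` by repeatedly adding a
new vertex joined to exactly the vertices of an existing `k`-clique; encoded by
a construction ordering of the vertices. -/
def IsKTree (k : ℕ) {V : Type} [Fintype V] (G : SimpleGraph V) : Prop :=
  k + 1 ≤ Fintype.card V ∧
  ∃ e : Fin (Fintype.card V) ≃ V,
    (∀ i j : Fin (Fintype.card V), (i : ℕ) < k + 1 → (j : ℕ) < k + 1 → i ≠ j →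
        G.Adj (e i) (e j)) ∧
    (∀ j : Fin (Fintype.card V), k + 1 ≤ (j : ℕ) →
      ∃ S : Finset (Fin (Fintype.card V)), S.card = k ∧ (∀ a ∈ S, a < j) ∧
        (∀ a ∈ S, ∀ b ∈ S, a ≠ b → G.Adj (e a) (e b)) ∧
        (∀ i : Fin (Fintype.card V), i < j → (G.Adj (e i) (e j) ↔ i ∈ S)))

/-- `G` is a partial `k`-tree: a subgraph of some `k`-tree. -/
def IsPartialKTree (k : ℕ) {V : Type} [Fintype V] (G : SimpleGraph V) : Prop :=
  ∃ (N : ℕ) (T : SimpleGraph (Fin N)), IsKTree k T ∧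
    ∃ f : V ↪ Fin N, ∀ u v : V, G.Adj u v → T.Adj (f u) (f v)

section Aux

open MixedGraph

variable {m n : ℕ} {V W : Type}

lemma MixedGraph.Adj.ne' {G : MixedGraph m n V} {u v : V} (h : G.Adj u v) : u ≠ v := by
  rintro rfl
  rcases h with h | h | h
  · simp [G.arc_asymm _ _ h] at h
  · simp [G.arc_asymm _ _ h] at h
  · simp [G.edge_irrefl u] at h

/-- Transport a mixed graph along an equivalence (contravariantly). -/
def MixedGraph.comapE (e : W ≃ V) (G : MixedGraph m n V) : MixedGraph m n W where
  arcColor u v := G.arcColor (e u) (e v)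
  edgeColor u v := G.edgeColor (e u) (e v)
  edge_symm u v := G.edge_symm _ _
  edge_irrefl v := G.edge_irrefl _
  arc_asymm u v h := G.arc_asymm _ _ h
  arc_not_edge u v h := G.arc_not_edge _ _ h

/-- Key propagation lemma: a simple homomorphism that identifies `a` and `b`
must also identify any vertex between them with them. -/
lemma MixedGraph.between_push [Fintype V] {G : MixedGraph m n V} {H : MixedGraph m n W}
    {φ : V → W} (hφ : G.IsSimpleHom H φ) {a b c : V} (hB : G.Between c a b)
    (hab : φ a = φ b) : φ c = φ a := by
  by_contra hc
  obtain ⟨-, hφa, hφe⟩ := hφ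
  obtain ⟨hac, hbc, hneg⟩ := hB
  have hca : φ a ≠ φ c := fun h => hc h.symm
  have hcb : φ b ≠ φ c := fun h => hc (h.symm.trans hab.symm)
  apply hneg
  rcases hac with h1 | h1 | h1 <;> rcases hbc with h2 | h2 | h2 <;>
    obtain ⟨j1, e1⟩ := Option.isSome_iff_exists.mp h1 <;>
    obtain ⟨j2, e2⟩ := Option.isSome_iff_exists.mp h2
  -- (arc a c, arc b c)
  · have k1 := (hφa a c j1 e1).resolve_left hca
    have k2 := (hφa b c j2 e2).resolve_left hcb
    rw [← hab] at k2
    rw [k1] at k2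
    exact Or.inr (Or.inl ⟨j1, e1, by rw [e2, Option.some_inj.mp k2]⟩)
  -- (arc a c, arc c b)
  · have k1 := (hφa a c j1 e1).resolve_left hca
    have k2 := (hφa c b j2 e2).resolve_left (fun h => hcb h.symm)
    rw [← hab] at k2
    have := H.arc_asymm _ _ (Option.isSome_iff_exists.mpr ⟨j1, k1⟩)
    rw [this] at k2
    exact absurd k2 (by simp)
  -- (arc a c, edge b c)
  · have k1 := (hφa a c j1 e1).resolve_left hca
    have k2 := (hφe b c j2 e2).resolve_left hcb
    rw [← hab] at k2
    have := H.arc_not_edge _ _ (Option.isSome_iff_exists.mpr ⟨j1, k1⟩)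
    rw [this] at k2
    exact absurd k2 (by simp)
  -- (arc c a, arc b c)
  · have k1 := (hφa c a j1 e1).resolve_left (fun h => hca h.symm)
    have k2 := (hφa b c j2 e2).resolve_left hcb
    rw [← hab] at k2
    have := H.arc_asymm _ _ (Option.isSome_iff_exists.mpr ⟨j2, k2⟩)
    rw [this] at k1
    exact absurd k1 (by simp)
  -- (arc c a, arc c b)
  · have k1 := (hφa c a j1 e1).resolve_left (fun h => hca h.symm)
    have k2 := (hφa c b j2 e2).resolve_left (fun h => hcb h.symm)
    rw [← hab, k1] at k2
    exact Or.inr (Or.inr ⟨j1, e1, by rw [e2, Option.some_inj.mp k2]⟩)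
  -- (arc c a, edge b c)
  · have k1 := (hφa c a j1 e1).resolve_left (fun h => hca h.symm)
    have k2 := (hφe b c j2 e2).resolve_left hcb
    rw [← hab] at k2
    have h3 := H.arc_not_edge _ _ (Option.isSome_iff_exists.mpr ⟨j1, k1⟩)
    rw [H.edge_symm] at k2
    rw [h3] at k2
    exact absurd k2 (by simp)
  -- (edge a c, arc b c)
  · have k1 := (hφe a c j1 e1).resolve_left hca
    have k2 := (hφa b c j2 e2).resolve_left hcb
    rw [← hab] at k2
    have := H.arc_not_edge _ _ (Option.isSome_iff_exists.mpr ⟨j2, k2⟩)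
    rw [this] at k1
    exact absurd k1 (by simp)
  -- (edge a c, arc c b)
  · have k1 := (hφe a c j1 e1).resolve_left hca
    have k2 := (hφa c b j2 e2).resolve_left (fun h => hcb h.symm)
    rw [← hab] at k2
    have h3 := H.arc_not_edge _ _ (Option.isSome_iff_exists.mpr ⟨j2, k2⟩)
    rw [H.edge_symm] at k1
    rw [h3] at k1
    exact absurd k1 (by simp)
  -- (edge a c, edge b c)
  · have k1 := (hφe a c j1 e1).resolve_left hca
    have k2 := (hφe b c j2 e2).resolve_left hcb
    rw [← hab, k1] at k2
    exact Or.inl ⟨j1, e1, by rw [e2, Option.some_inj.mp k2]⟩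

/-- The trivial mixed graph with no adjacencies. -/
def MixedGraph.triv (m n : ℕ) (V : Type) : MixedGraph m n V where
  arcColor _ _ := none
  edgeColor _ _ := none
  edge_symm _ _ := rfl
  edge_irrefl _ := rfl
  arc_asymm _ _ h := by simp at h
  arc_not_edge _ _ h := by simp at h

lemma MixedGraph.isHom_id (G : MixedGraph m n V) : G.IsHom G id :=
  ⟨fun _ _ h => h.ne', fun _ _ _ h => h, fun _ _ _ h => h⟩

lemma MixedGraph.chrom_le [Fintype V] {G : MixedGraph m n V} {t : ℕ}
    (h : ∃ H : MixedGraph m n (Fin t), ∃ φ : V → Fin t, G.IsHom H φ) : G.chrom ≤ t :=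
  Nat.sInf_le h

lemma MixedGraph.simpleChrom_le [Fintype V] {G : MixedGraph m n V} {t : ℕ}
    (h : ∃ H : MixedGraph m n (Fin t), ∃ φ : V → Fin t, G.IsSimpleHom H φ) :
    G.simpleChrom ≤ t :=
  Nat.sInf_le h

end Aux
set_option linter.unusedVariables false
set_option maxHeartbeats 1000000

section Link

/-- A pair of disagreeing adjacency prescriptions (arc there, arc back, edge). -/
structure LinkPair (m n : ℕ) where
  d : Fin 2 → Option (Fin m) × Option (Fin m) × Option (Fin n)
  adj : ∀ b, (d b).1.isSome ∨ (d b).2.1.isSome ∨ (d b).2.2.isSome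
  v1 : ∀ b, (d b).1.isSome → (d b).2.1 = none ∧ (d b).2.2 = none
  v2 : ∀ b, (d b).2.1.isSome → (d b).1 = none ∧ (d b).2.2 = none
  dis_e : ¬ ∃ i : Fin n, (d 0).2.2 = some i ∧ (d 1).2.2 = some i
  dis_a1 : ¬ ∃ j : Fin m, (d 0).1 = some j ∧ (d 1).1 = some j
  dis_a2 : ¬ ∃ j : Fin m, (d 0).2.1 = some j ∧ (d 1).2.1 = some j

def linkPairArc (m n : ℕ) (hm : 0 < m) : LinkPair m n where
  d b := if b = 0 then (some ⟨0, hm⟩, none, none) else (none, some ⟨0, hm⟩, none)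
  adj := by intro b; fin_cases b <;> simp
  v1 := by intro b h; fin_cases b <;> simp_all
  v2 := by intro b h; fin_cases b <;> simp_all
  dis_e := by rintro ⟨i, h0, h1⟩; simp at h0
  dis_a1 := by rintro ⟨j, h0, h1⟩; simp at h1
  dis_a2 := by rintro ⟨j, h0, h1⟩; simp at h0

def linkPairEdge (m n : ℕ) (hn : 2 ≤ n) : LinkPair m n where
  d b := (none, none, some (if b = 0 then ⟨0, by omega⟩ else ⟨1, by omega⟩))
  adj := by intro b; simp
  v1 := by intro b h; simp at h
  v2 := by intro b h; simp at h
  dis_e := by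
    rintro ⟨i, h0, h1⟩
    simp at h0 h1
    rw [← h1] at h0
    exact absurd (Fin.val_eq_of_eq h0) (by simp)
  dis_a1 := by rintro ⟨j, h0, h1⟩; simp at h0
  dis_a2 := by rintro ⟨j, h0, h1⟩; simp at h0

lemma linkPair_exists (m n : ℕ) (hmn : 1 ≤ m + n) (hne : (m, n) ≠ (0, 1)) :
    Nonempty (LinkPair m n) := by
  rcases Nat.eq_zero_or_pos m with hm | hm
  · subst hm
    have hn : 2 ≤ n := by
      have : n ≠ 1 := fun h => hne (by simp [h])
      omega
    exact ⟨linkPairEdge 0 n hn⟩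
  · exact ⟨linkPairArc m n hm⟩

end Link

section Construction

open MixedGraph Sum

attribute [local instance] Classical.propDecidable

variable {m n : ℕ} {k NT : ℕ} (T : SimpleGraph (Fin NT))

/-- Index type for helper vertices: a `k`-clique `S` of `T` together with three
distinct members `a, b, c` of `S`, and a boolean. -/
def HelperIdx (k : ℕ) (T : SimpleGraph (Fin NT)) : Type :=
  { x : Finset (Fin NT) × Fin NT × Fin NT × Fin NT //
      x.1.card = k ∧ (∀ a ∈ x.1, ∀ b ∈ x.1, a ≠ b → T.Adj a b) ∧
      x.2.1 ∈ x.1 ∧ x.2.2.1 ∈ x.1 ∧ x.2.2.2 ∈ x.1 ∧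
      x.2.1 ≠ x.2.2.1 ∧ x.2.1 ≠ x.2.2.2 ∧ x.2.2.1 ≠ x.2.2.2 } × Bool

noncomputable instance : Fintype (HelperIdx k T) := by
  unfold HelperIdx; infer_instance

namespace HelperIdx

variable {T}

def S (h : HelperIdx k T) : Finset (Fin NT) := h.1.1.1
def A (h : HelperIdx k T) : Fin NT := h.1.1.2.1
def B (h : HelperIdx k T) : Fin NT := h.1.1.2.2.1
def C (h : HelperIdx k T) : Fin NT := h.1.1.2.2.2

lemma card_S (h : HelperIdx k T) : h.S.card = k := h.1.2.1
lemma clique_S (h : HelperIdx k T) : ∀ a ∈ h.S, ∀ b ∈ h.S, a ≠ b → T.Adj a b := h.1.2.2.1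
lemma A_mem (h : HelperIdx k T) : h.A ∈ h.S := h.1.2.2.2.1
lemma B_mem (h : HelperIdx k T) : h.B ∈ h.S := h.1.2.2.2.2.1
lemma C_mem (h : HelperIdx k T) : h.C ∈ h.S := h.1.2.2.2.2.2.1
lemma A_ne_B (h : HelperIdx k T) : h.A ≠ h.B := h.1.2.2.2.2.2.2.1
lemma A_ne_C (h : HelperIdx k T) : h.A ≠ h.C := h.1.2.2.2.2.2.2.2.1
lemma B_ne_C (h : HelperIdx k T) : h.B ≠ h.C := h.1.2.2.2.2.2.2.2.2

end HelperIdx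

variable (L : LinkPair m n)

/-- The adjacency prescription between a base vertex `x` and helper `h`,
oriented from base to helper. -/
noncomputable def linkOf (h : HelperIdx k T) (x : Fin NT) :
    Option (Fin m) × Option (Fin m) × Option (Fin n) :=
  if x = h.A then L.d 0 else if x = h.B then L.d 1
  else if x = h.C then L.d (if h.2 then 1 else 0) else (none, none, none)

variable {N : ℕ} (G : MixedGraph m n (Fin N)) (f : Fin N ↪ Fin NT)

/-- Partial inverse of the embedding `f`. -/
noncomputable def pinv (x : Fin NT) : Option (Fin N) :=
  if h : ∃ u, f u = x then some h.choose else none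

lemma pinv_f (u : Fin N) : pinv f (f u) = some u := by
  have h : ∃ u', f u' = f u := ⟨u, rfl⟩
  simp only [pinv, dif_pos h]
  exact congrArg some (f.injective h.choose_spec)

lemma pinv_some {x : Fin NT} {u : Fin N} (h : pinv f x = some u) : f u = x := by
  by_cases h' : ∃ u', f u' = x
  · simp only [pinv, dif_pos h'] at h
    rw [← Option.some_inj.mp h]
    exact h'.choose_spec
  · simp [pinv, dif_neg h'] at h

/-- The pushforward of `G` along the embedding `f`. -/
noncomputable def Gbig : MixedGraph m n (Fin NT) where
  arcColor x y := match pinv f x, pinv f y with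
    | some u, some v => G.arcColor u v
    | _, _ => none
  edgeColor x y := match pinv f x, pinv f y with
    | some u, some v => G.edgeColor u v
    | _, _ => none
  edge_symm x y := by
    cases hx : pinv f x <;> cases hy : pinv f y <;> simp [hx, hy, G.edge_symm]
  edge_irrefl x := by
    cases hx : pinv f x <;> simp [hx, G.edge_irrefl]
  arc_asymm x y h := by
    cases hx : pinv f x <;> cases hy : pinv f y <;> simp only [hx, hy] at h ⊢ <;>
      first | exact G.arc_asymm _ _ h | simp at h
  arc_not_edge x y h := by
    cases hx : pinv f x <;> cases hy : pinv f y <;> simp only [hx, hy] at h ⊢ <;>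
      first | exact G.arc_not_edge _ _ h | simp at h

lemma Gbig_arc (u v : Fin N) : (Gbig G f).arcColor (f u) (f v) = G.arcColor u v := by
  simp [Gbig, pinv_f]

lemma Gbig_edge (u v : Fin N) : (Gbig G f).edgeColor (f u) (f v) = G.edgeColor u v := by
  simp [Gbig, pinv_f]

lemma Gbig_adj {x y : Fin NT} (hG : ∀ u v, G.Adj u v → T.Adj (f u) (f v))
    (h : (Gbig G f).Adj x y) : T.Adj x y := by
  rcases h with h | h | h <;>
  · simp only [Gbig] at h
    rcases hx : pinv f x with _ | u <;> rcases hy : pinv f y with _ | v <;>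
      simp only [hx, hy] at h <;>
    first
      | simp at h
      | exact pinv_some f hx ▸ pinv_some f hy ▸ hG u v (Or.inl h)
      | exact pinv_some f hx ▸ pinv_some f hy ▸ hG u v (Or.inr (Or.inl h))
      | exact pinv_some f hx ▸ pinv_some f hy ▸ hG u v (Or.inr (Or.inr h))

end Construction
section Construction2

open MixedGraph Sum

attribute [local instance] Classical.propDecidable

variable {m n : ℕ} {k NT : ℕ} (T : SimpleGraph (Fin NT)) (L : LinkPair m n)
variable {N : ℕ} (G : MixedGraph m n (Fin N)) (f : Fin N ↪ Fin NT)

/-- The augmented mixed graph: `G` pushed to `Fin NT` together with all helper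
vertices. -/
noncomputable def Gp : MixedGraph m n (Fin NT ⊕ HelperIdx k T) where
  arcColor x y := match x, y with
    | inl a, inl b => (Gbig G f).arcColor a b
    | inl a, inr h => (linkOf T L h a).1
    | inr h, inl a => (linkOf T L h a).2.1
    | inr _, inr _ => none
  edgeColor x y := match x, y with
    | inl a, inl b => (Gbig G f).edgeColor a b
    | inl a, inr h => (linkOf T L h a).2.2
    | inr h, inl a => (linkOf T L h a).2.2
    | inr _, inr _ => none
  edge_symm x y := by
    rcases x with a | h <;> rcases y with b | h' <;> simp [(Gbig G f).edge_symm]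
  edge_irrefl x := by
    rcases x with a | h <;> simp [(Gbig G f).edge_irrefl]
  arc_asymm x y hs := by
    rcases x with a | h <;> rcases y with b | h' <;> simp only at hs ⊢
    · exact (Gbig G f).arc_asymm a b hs
    · unfold linkOf at hs ⊢
      split_ifs at hs ⊢ <;> first | exact (L.v1 _ hs).1 | simp at hs
    · unfold linkOf at hs ⊢
      split_ifs at hs ⊢ <;> first | exact (L.v2 _ hs).1 | simp at hs
  arc_not_edge x y hs := by
    rcases x with a | h <;> rcases y with b | h' <;> simp only at hs ⊢
    · exact (Gbig G f).arc_not_edge a b hs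
    · unfold linkOf at hs ⊢
      split_ifs at hs ⊢ <;> first | exact (L.v1 _ hs).2 | simp at hs
    · unfold linkOf at hs ⊢
      split_ifs at hs ⊢ <;> first | exact (L.v2 _ hs).2 | simp at hs

lemma Gp_arc_inl (u v : Fin N) :
    (Gp (k := k) T L G f).arcColor (inl (f u)) (inl (f v)) = G.arcColor u v := Gbig_arc G f u v

lemma Gp_edge_inl (u v : Fin N) :
    (Gp (k := k) T L G f).edgeColor (inl (f u)) (inl (f v)) = G.edgeColor u v := Gbig_edge G f u v

lemma linkOf_A (h : HelperIdx k T) : linkOf T L h h.A = L.d 0 := by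
  simp [linkOf]

lemma linkOf_B (h : HelperIdx k T) : linkOf T L h h.B = L.d 1 := by
  simp [linkOf, (h.A_ne_B).symm]

lemma linkOf_C (h : HelperIdx k T) : linkOf T L h h.C = L.d (if h.2 then 1 else 0) := by
  simp [linkOf, (h.A_ne_C).symm, (h.B_ne_C).symm]

/-- A base vertex is adjacent (in the augmented graph) to a helper as soon as
its prescription is one of `L.d b`. -/
lemma Gp_adj_helper (h : HelperIdx k T) {x : Fin NT} {b : Fin 2}
    (hx : linkOf T L h x = L.d b) : (Gp T L G f).Adj (inl x) (inr h) := by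
  rcases L.adj b with hs | hs | hs
  · exact Or.inl (by simp only [Gp, hx]; exact hs)
  · exact Or.inr (Or.inl (by simp only [Gp, hx]; exact hs))
  · exact Or.inr (Or.inr (by simp only [Gp, hx]; exact hs))

/-- Each helper vertex lies between `A h` and `B h`. -/
lemma Gp_between_AB (h : HelperIdx k T) :
    (Gp T L G f).Between (inr h) (inl h.A) (inl h.B) := by
  refine ⟨Gp_adj_helper T L G f h (linkOf_A T L h), Gp_adj_helper T L G f h (linkOf_B T L h), ?_⟩
  rintro (⟨i, h0, h1⟩ | ⟨j, h0, h1⟩ | ⟨j, h0, h1⟩)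
  · exact L.dis_e ⟨i, by simpa [Gp, linkOf_A T L h] using h0, by simpa [Gp, linkOf_B T L h] using h1⟩
  · exact L.dis_a1 ⟨j, by simpa [Gp, linkOf_A T L h] using h0, by simpa [Gp, linkOf_B T L h] using h1⟩
  · exact L.dis_a2 ⟨j, by simpa [Gp, linkOf_A T L h] using h0, by simpa [Gp, linkOf_B T L h] using h1⟩

/-- `C h` lies between the two helpers over the same tuple. -/
lemma Gp_between_C (w : {x : Finset (Fin NT) × Fin NT × Fin NT × Fin NT //
      x.1.card = k ∧ (∀ a ∈ x.1, ∀ b ∈ x.1, a ≠ b → T.Adj a b) ∧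
      x.2.1 ∈ x.1 ∧ x.2.2.1 ∈ x.1 ∧ x.2.2.2 ∈ x.1 ∧
      x.2.1 ≠ x.2.2.1 ∧ x.2.1 ≠ x.2.2.2 ∧ x.2.2.1 ≠ x.2.2.2}) :
    (Gp T L G f).Between (inl (HelperIdx.C (k := k) (T := T) (w, false)))
      (inr (w, false)) (inr (w, true)) := by
  have hp : linkOf T L ((w, false) : HelperIdx k T) (HelperIdx.C (k := k) (T := T) (w, false)) = L.d 0 :=
    linkOf_C T L (w, false)
  have hq : linkOf T L ((w, true) : HelperIdx k T) (HelperIdx.C (k := k) (T := T) (w, false)) = L.d 1 := by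
    have := linkOf_C T L ((w, true) : HelperIdx k T)
    simpa [HelperIdx.C] using this
  constructor
  · -- Adj (inr (w,false)) (inl C)
    rcases L.adj 0 with hs | hs | hs
    · exact Or.inr (Or.inl (by simp only [Gp, hp]; exact hs))
    · exact Or.inl (by simp only [Gp, hp]; exact hs)
    · exact Or.inr (Or.inr (by simp only [Gp, hp]; exact hs))
  refine ⟨?_, ?_⟩
  · rcases L.adj 1 with hs | hs | hs
    · exact Or.inr (Or.inl (by simp only [Gp, hq]; exact hs))
    · exact Or.inl (by simp only [Gp, hq]; exact hs)
    · exact Or.inr (Or.inr (by simp only [Gp, hq]; exact hs))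
  rintro (⟨i, h0, h1⟩ | ⟨j, h0, h1⟩ | ⟨j, h0, h1⟩)
  · exact L.dis_e ⟨i, by simpa [Gp, hp] using h0, by simpa [Gp, hq] using h1⟩
  · exact L.dis_a2 ⟨j, by simpa [Gp, hp] using h0, by simpa [Gp, hq] using h1⟩
  · exact L.dis_a1 ⟨j, by simpa [Gp, hp] using h0, by simpa [Gp, hq] using h1⟩

end Construction2
section Collapse

open MixedGraph Sum

attribute [local instance] Classical.propDecidable

variable {m n : ℕ} {k NT : ℕ} {T : SimpleGraph (Fin NT)} {L : LinkPair m n}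
variable {N : ℕ} {G : MixedGraph m n (Fin N)} {f : Fin N ↪ Fin NT}
variable {W : Type} {Hgt : MixedGraph m n W} {φ : (Fin NT ⊕ HelperIdx k T) → W}

lemma tripleAbsorb (hφ : (Gp (k := k) T L G f).IsSimpleHom Hgt φ) {s : W}
    (w : {x : Finset (Fin NT) × Fin NT × Fin NT × Fin NT //
      x.1.card = k ∧ (∀ a ∈ x.1, ∀ b ∈ x.1, a ≠ b → T.Adj a b) ∧
      x.2.1 ∈ x.1 ∧ x.2.2.1 ∈ x.1 ∧ x.2.2.2 ∈ x.1 ∧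
      x.2.1 ≠ x.2.2.1 ∧ x.2.1 ≠ x.2.2.2 ∧ x.2.2.1 ≠ x.2.2.2})
    (hA : φ (inl w.val.2.1) = s) (hB : φ (inl w.val.2.2.1) = s) :
    φ (inl w.val.2.2.2) = s := by
  have h1 : φ (inr ((w, false) : HelperIdx k T)) = s := by
    have := MixedGraph.between_push hφ (Gp_between_AB T L G f (w, false))
      (hA.trans hB.symm)
    rw [this]; exact hA
  have h2 : φ (inr ((w, true) : HelperIdx k T)) = s := by
    have := MixedGraph.between_push hφ (Gp_between_AB T L G f (w, true))
      (hA.trans hB.symm)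
    rw [this]; exact hA
  have h3 : φ (inl w.val.2.2.2) = φ (inr ((w, false) : HelperIdx k T)) :=
    MixedGraph.between_push hφ (Gp_between_C T L G f w) (h1.trans h2.symm)
  rw [h3]; exact h1

lemma cliqueAbsorb (hφ : (Gp (k := k) T L G f).IsSimpleHom Hgt φ) (hk : 3 ≤ k) {s : W}
    {C : Finset (Fin NT)} (hcard : C.card = k + 1)
    (hclq : ∀ a ∈ C, ∀ b ∈ C, a ≠ b → T.Adj a b) {a b : Fin NT}
    (ha : a ∈ C) (hb : b ∈ C) (hab : a ≠ b)
    (hfa : φ (inl a) = s) (hfb : φ (inl b) = s) :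
    ∀ c ∈ C, φ (inl c) = s := by
  intro c hc
  by_cases hca : c = a
  · rw [hca]; exact hfa
  by_cases hcb : c = b
  · rw [hcb]; exact hfb
  have hsub : ¬ C ⊆ ({a, b, c} : Finset (Fin NT)) := by
    intro hsub
    have := Finset.card_le_card hsub
    have h3 : ({a, b, c} : Finset (Fin NT)).card ≤ 3 := by
      apply le_trans (Finset.card_insert_le _ _)
      apply le_trans (Nat.add_le_add_right (Finset.card_insert_le _ _) 1)
      simp
    omega
  obtain ⟨d, hd, hdn⟩ := Finset.not_subset.mp hsub
  simp only [Finset.mem_insert, Finset.mem_singleton, not_or] at hdn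
  obtain ⟨hda, hdb, hdc⟩ := hdn
  set S := C.erase d with hSdef
  have hScard : S.card = k := by
    rw [hSdef, Finset.card_erase_of_mem hd, hcard]
    omega
  have hmem : ∀ z ∈ C, z ≠ d → z ∈ S := fun z hz hzd => Finset.mem_erase.mpr ⟨hzd, hz⟩
  have hclqS : ∀ u ∈ S, ∀ v ∈ S, u ≠ v → T.Adj u v := fun u hu v hv huv =>
    hclq u (Finset.mem_of_mem_erase hu) v (Finset.mem_of_mem_erase hv) huv
  exact tripleAbsorb hφ ⟨(S, a, b, c), hScard, hclqS, hmem a ha (fun h => hda h.symm),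
      hmem b hb (fun h => hdb h.symm), hmem c hc (fun h => hdc h.symm),
      hab, fun h => hca h.symm, fun h => hcb h.symm⟩ hfa hfb

lemma collapse (hφ : (Gp (k := k) T L G f).IsSimpleHom Hgt φ) (hk : 3 ≤ k)
    (hT : IsKTree k T) {x y : Fin NT} (hxy : T.Adj x y)
    (heq : φ (inl x) = φ (inl y)) : False := by
  obtain ⟨hNT, e, hbase, hstep⟩ := hT
  choose! Sf hS1 hS2 hS3 hS4 using hstep
  set s := φ (inl x) with hs
  -- absorbing a (k+1)-clique attached below a vertex q with k+1 ≤ q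
  have cliqueOf : ∀ q : Fin (Fintype.card (Fin NT)), k + 1 ≤ (q : ℕ) →
      ∃ C : Finset (Fin NT), C.card = k + 1 ∧
        (∀ a ∈ C, ∀ b ∈ C, a ≠ b → T.Adj a b) ∧ e q ∈ C ∧
        (∀ a ∈ Sf q, e a ∈ C) := by
    intro q hq
    refine ⟨insert (e q) ((Sf q).image e), ?_, ?_, Finset.mem_insert_self _ _, ?_⟩
    · rw [Finset.card_insert_of_notMem, Finset.card_image_of_injective _ e.injective,
        hS1 q hq]
      intro hmem
      obtain ⟨a, haS, hae⟩ := Finset.mem_image.mp hmem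
      exact absurd (e.injective hae) (ne_of_lt (hS2 q hq a haS))
    · intro u hu v hv huv
      rcases Finset.mem_insert.mp hu with rfl | hu <;>
        rcases Finset.mem_insert.mp hv with rfl | hv
      · exact absurd rfl huv
      · obtain ⟨a, haS, rfl⟩ := Finset.mem_image.mp hv
        exact ((hS4 q hq a (hS2 q hq a haS)).mpr haS).symm
      · obtain ⟨a, haS, rfl⟩ := Finset.mem_image.mp hu
        exact (hS4 q hq a (hS2 q hq a haS)).mpr haS
      · obtain ⟨a, haS, rfl⟩ := Finset.mem_image.mp hu
        obtain ⟨b, hbS, rfl⟩ := Finset.mem_image.mp hv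
        exact hS3 q hq a haS b hbS (fun h => huv (congrArg e h))
    · intro a haS
      exact Finset.mem_insert_of_mem (Finset.mem_image_of_mem e haS)
  -- base clique
  have baseClique : ∃ B : Finset (Fin NT), B.card = k + 1 ∧
      (∀ a ∈ B, ∀ b ∈ B, a ≠ b → T.Adj a b) ∧
      (∀ r : Fin (Fintype.card (Fin NT)), (r : ℕ) < k + 1 → e r ∈ B) := by
    refine ⟨Finset.image (fun i : Fin (k+1) => e (Fin.castLE hNT i)) Finset.univ, ?_, ?_, ?_⟩
    · have hinj : Function.Injective (fun i : Fin (k+1) => e (Fin.castLE hNT i)) :=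
        fun i j h => Fin.castLE_injective hNT (e.injective h)
      rw [Finset.card_image_of_injective _ hinj, Finset.card_univ, Fintype.card_fin]
    · intro u hu v hv huv
      obtain ⟨i, -, rfl⟩ := Finset.mem_image.mp hu
      obtain ⟨j, -, rfl⟩ := Finset.mem_image.mp hv
      exact hbase _ _ (by simp; omega) (by simp; omega) (fun h => huv (congrArg e h)) 
    · intro r hr
      exact Finset.mem_image.mpr ⟨⟨(r : ℕ), hr⟩, Finset.mem_univ _,
        congrArg e (Fin.val_injective rfl)⟩
  obtain ⟨B, hBcard, hBclq, hBmem⟩ := baseClique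
  -- downward propagation to the base clique
  have toBase : ∀ t : ℕ, ∀ p q : Fin (Fintype.card (Fin NT)), (q : ℕ) ≤ t → p < q →
      T.Adj (e p) (e q) → φ (inl (e p)) = s → φ (inl (e q)) = s →
      ∀ r : Fin (Fintype.card (Fin NT)), (r : ℕ) < k + 1 → φ (inl (e r)) = s := by
    intro t
    induction t using Nat.strong_induction_on with
    | _ t IH =>
      intro p q hqt hpq hadj hfp hfq r hr
      by_cases hq : (q : ℕ) < k + 1
      · have habs := cliqueAbsorb hφ hk hBcard hBclq (hBmem p (lt_trans hpq hq))
          (hBmem q hq) (fun h => (ne_of_lt hpq) (e.injective h)) hfp hfq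
        exact habs _ (hBmem r hr)
      · push_neg at hq
        obtain ⟨C, hCcard, hCclq, hCq, hCS⟩ := cliqueOf q hq
        have hpS : p ∈ Sf q := (hS4 q hq p hpq).mp hadj
        have habs := cliqueAbsorb hφ hk hCcard hCclq (hCS p hpS) hCq
          (fun h => (ne_of_lt hpq) (e.injective h)) hfp hfq
        have hS2' : 1 < (Sf q).card := by rw [hS1 q hq]; omega
        obtain ⟨a, haS, b, hbS, habne⟩ := Finset.one_lt_card.mp hS2'
        have hfab : φ (inl (e a)) = s ∧ φ (inl (e b)) = s :=
          ⟨habs _ (hCS a haS), habs _ (hCS b hbS)⟩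
        have hadjab : T.Adj (e a) (e b) := hS3 q hq a haS b hbS habne
        rcases lt_or_gt_of_ne habne with hab | hab
        · exact IH (b : ℕ) (lt_of_lt_of_le (hS2 q hq b hbS) hqt) a b le_rfl hab
            hadjab hfab.1 hfab.2 r hr
        · exact IH (a : ℕ) (lt_of_lt_of_le (hS2 q hq a haS) hqt) b a le_rfl hab
            hadjab.symm hfab.2 hfab.1 r hr
  -- seed the induction
  have hbaseAll : ∀ r : Fin (Fintype.card (Fin NT)), (r : ℕ) < k + 1 →
      φ (inl (e r)) = s := by
    set p0 := e.symm x with hp0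
    set q0 := e.symm y with hq0
    have hex : e p0 = x := e.apply_symm_apply x
    have hey : e q0 = y := e.apply_symm_apply y
    have hne : p0 ≠ q0 := fun h => hxy.ne (by rw [← hex, ← hey, h])
    have hadj : T.Adj (e p0) (e q0) := by rw [hex, hey]; exact hxy
    have hfx : φ (inl (e p0)) = s := by rw [hex]
    have hfy : φ (inl (e q0)) = s := by rw [hey]; exact heq.symm
    rcases lt_or_gt_of_ne hne with h | h
    · exact toBase (q0 : ℕ) p0 q0 le_rfl h hadj hfx hfy
    · exact toBase (p0 : ℕ) q0 p0 le_rfl h hadj.symm hfy hfx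
  -- upward propagation over the construction order
  have up : ∀ t : ℕ, ∀ i : Fin (Fintype.card (Fin NT)), (i : ℕ) ≤ t →
      φ (inl (e i)) = s := by
    intro t
    induction t using Nat.strong_induction_on with
    | _ t IH =>
      intro i hit
      by_cases hi : (i : ℕ) < k + 1
      · exact hbaseAll i hi
      · push_neg at hi
        obtain ⟨C, hCcard, hCclq, hCq, hCS⟩ := cliqueOf i hi
        have hS2' : 1 < (Sf i).card := by rw [hS1 i hi]; omega
        obtain ⟨a, haS, b, hbS, habne⟩ := Finset.one_lt_card.mp hS2'
        have hfa : φ (inl (e a)) = s := by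
          have hai : (a : ℕ) < (i : ℕ) := hS2 i hi a haS
          exact IH (a : ℕ) (lt_of_lt_of_le hai hit) a le_rfl
        have hfb : φ (inl (e b)) = s := by
          have hbi : (b : ℕ) < (i : ℕ) := hS2 i hi b hbS
          exact IH (b : ℕ) (lt_of_lt_of_le hbi hit) b le_rfl
        exact cliqueAbsorb hφ hk hCcard hCclq (hCS a haS) (hCS b hbS)
          (fun h => habne (e.injective h)) hfa hfb _ hCq
  have hinl : ∀ z : Fin NT, φ (inl z) = s := by
    intro z
    have := up ((e.symm z : Fin _) : ℕ) (e.symm z) le_rfl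
    rwa [e.apply_symm_apply] at this
  have hinr : ∀ h : HelperIdx k T, φ (inr h) = s := by
    intro h
    have := MixedGraph.between_push hφ (Gp_between_AB T L G f h)
      ((hinl h.A).trans (hinl h.B).symm)
    rw [this]; exact hinl h.A
  have hconst : ∀ v : Fin NT ⊕ HelperIdx k T, φ v = s := by
    rintro (z | h)
    · exact hinl z
    · exact hinr h
  rcases hφ.1 with hcard1 | ⟨u, v, huv⟩
  · rw [Fintype.card_sum, Fintype.card_fin] at hcard1
    have : k + 1 ≤ NT := by simpa using hNT
    omega
  · exact huv ((hconst u).trans (hconst v).symm)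

end Collapse
section KTreeTransfer

/-- Transfer of `k`-tree construction data along a value-preserving equivalence
of index types. -/
lemma ktreeData_transfer {kk M₁ M₂ : ℕ} {V : Type} (T2 : SimpleGraph V)
    (σ : Fin M₂ ≃ Fin M₁) (hval : ∀ i, ((σ i) : ℕ) = (i : ℕ))
    (e₁ : Fin M₁ ≃ V)
    (hbase : ∀ i j : Fin M₁, (i : ℕ) < kk + 1 → (j : ℕ) < kk + 1 → i ≠ j →
      T2.Adj (e₁ i) (e₁ j))
    (hstep : ∀ j : Fin M₁, kk + 1 ≤ (j : ℕ) →
      ∃ S : Finset (Fin M₁), S.card = kk ∧ (∀ a ∈ S, a < j) ∧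
        (∀ a ∈ S, ∀ b ∈ S, a ≠ b → T2.Adj (e₁ a) (e₁ b)) ∧
        (∀ i : Fin M₁, i < j → (T2.Adj (e₁ i) (e₁ j) ↔ i ∈ S))) :
    (∀ i j : Fin M₂, (i : ℕ) < kk + 1 → (j : ℕ) < kk + 1 → i ≠ j →
      T2.Adj ((σ.trans e₁) i) ((σ.trans e₁) j)) ∧
    (∀ j : Fin M₂, kk + 1 ≤ (j : ℕ) →
      ∃ S : Finset (Fin M₂), S.card = kk ∧ (∀ a ∈ S, a < j) ∧
        (∀ a ∈ S, ∀ b ∈ S, a ≠ b → T2.Adj ((σ.trans e₁) a) ((σ.trans e₁) b)) ∧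
        (∀ i : Fin M₂, i < j → (T2.Adj ((σ.trans e₁) i) ((σ.trans e₁) j) ↔ i ∈ S))) := by
  constructor
  · intro i j hi hj hij
    exact hbase (σ i) (σ j) (by rw [hval]; exact hi) (by rw [hval]; exact hj)
      (fun h => hij (σ.injective h))
  · intro j hj
    obtain ⟨S, hS1, hS2, hS3, hS4⟩ := hstep (σ j) (by rw [hval]; exact hj)
    refine ⟨S.map σ.symm.toEmbedding, by simp [hS1], ?_, ?_, ?_⟩
    · intro a ha
      rw [Finset.mem_map_equiv, Equiv.symm_symm] at ha
      have h2 := hS2 (σ a) ha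
      rw [Fin.lt_def] at h2 ⊢
      rwa [hval a, hval j] at h2
    · intro a ha b hb hab
      rw [Finset.mem_map_equiv, Equiv.symm_symm] at ha hb
      exact hS3 (σ a) ha (σ b) hb (fun h => hab (σ.injective h))
    · intro i hi
      rw [Finset.mem_map_equiv, Equiv.symm_symm]
      exact hS4 (σ i) (by rw [Fin.lt_def, hval, hval]; exact hi)

/-- Constructor for `IsKTree` with index space `Fin M`. -/
lemma isKTree_mk {kk M : ℕ} {V : Type} [Fintype V] (T2 : SimpleGraph V)
    (hcV : Fintype.card V = M) (hc : kk + 1 ≤ M) (eM : Fin M ≃ V)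
    (hbase : ∀ i j : Fin M, (i : ℕ) < kk + 1 → (j : ℕ) < kk + 1 → i ≠ j →
      T2.Adj (eM i) (eM j))
    (hstep : ∀ j : Fin M, kk + 1 ≤ (j : ℕ) →
      ∃ S : Finset (Fin M), S.card = kk ∧ (∀ a ∈ S, a < j) ∧
        (∀ a ∈ S, ∀ b ∈ S, a ≠ b → T2.Adj (eM a) (eM b)) ∧
        (∀ i : Fin M, i < j → (T2.Adj (eM i) (eM j) ↔ i ∈ S))) :
    IsKTree kk T2 := by
  have hval : ∀ i : Fin (Fintype.card V), (((finCongr hcV) i : Fin M) : ℕ) = (i : ℕ) := by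
    intro i; simp
  obtain ⟨h1, h2⟩ := ktreeData_transfer T2 (finCongr hcV) hval eM hbase hstep
  exact ⟨hcV ▸ hc, (finCongr hcV).trans eM, h1, h2⟩

/-- Destructor for `IsKTree` with index space `Fin M`. -/
lemma isKTree_elim {kk M : ℕ} {V : Type} [Fintype V] {T2 : SimpleGraph V}
    (hcV : Fintype.card V = M) (h : IsKTree kk T2) :
    kk + 1 ≤ M ∧ ∃ eM : Fin M ≃ V,
    (∀ i j : Fin M, (i : ℕ) < kk + 1 → (j : ℕ) < kk + 1 → i ≠ j →
      T2.Adj (eM i) (eM j)) ∧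
    (∀ j : Fin M, kk + 1 ≤ (j : ℕ) →
      ∃ S : Finset (Fin M), S.card = kk ∧ (∀ a ∈ S, a < j) ∧
        (∀ a ∈ S, ∀ b ∈ S, a ≠ b → T2.Adj (eM a) (eM b)) ∧
        (∀ i : Fin M, i < j → (T2.Adj (eM i) (eM j) ↔ i ∈ S))) := by
  obtain ⟨hc, e, hbase, hstep⟩ := h
  have hval : ∀ i : Fin M, (((finCongr hcV).symm i : Fin (Fintype.card V)) : ℕ) = (i : ℕ) := by
    intro i; simp
  obtain ⟨h1, h2⟩ := ktreeData_transfer T2 (finCongr hcV).symm hval e hbase hstep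
  exact ⟨hcV ▸ hc, ((finCongr hcV).symm).trans e, h1, h2⟩

end KTreeTransfer

section BigTree

open MixedGraph Sum

attribute [local instance] Classical.propDecidable

variable {m n : ℕ} {k NT : ℕ} (T : SimpleGraph (Fin NT)) (L : LinkPair m n)
variable {N : ℕ} (G : MixedGraph m n (Fin N)) (f : Fin N ↪ Fin NT)

/-- The `k`-tree extension of `T` by all helper vertices. -/
def Tp (k : ℕ) (T : SimpleGraph (Fin NT)) : SimpleGraph (Fin NT ⊕ HelperIdx k T) where
  Adj x y := match x, y with
    | inl a, inl b => T.Adj a b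
    | inl a, inr h => a ∈ h.S
    | inr h, inl a => a ∈ h.S
    | inr _, inr _ => False
  symm := by
    refine ⟨?_⟩
    rintro (a | h) (b | h') hadj
    · exact hadj.symm
    · exact hadj
    · exact hadj
    · exact hadj
  loopless := by
    refine ⟨?_⟩
    rintro (a | h) hadj
    · exact T.loopless.irrefl a hadj
    · exact hadj

lemma linkOf_none (h : HelperIdx k T) {x : Fin NT} (hA : x ≠ h.A) (hB : x ≠ h.B)
    (hC : x ≠ h.C) : linkOf T L h x = (none, none, none) := by
  simp [linkOf, hA, hB, hC]

/-- The underlying graph of the augmented mixed graph is a subgraph of `Tp`. -/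
lemma Gp_sub (hfT : ∀ u v, G.Adj u v → T.Adj (f u) (f v)) :
    ∀ x y, (Gp (k := k) T L G f).Adj x y → (Tp k T).Adj x y := by
  have hlink : ∀ (h : HelperIdx k T) (x : Fin NT),
      ((linkOf T L h x).1.isSome ∨ (linkOf T L h x).2.1.isSome ∨
        (linkOf T L h x).2.2.isSome) → x ∈ h.S := by
    intro h x hx
    by_cases hA : x = h.A
    · rw [hA]; exact h.A_mem
    by_cases hB : x = h.B
    · rw [hB]; exact h.B_mem
    by_cases hC : x = h.C
    · rw [hC]; exact h.C_mem
    rw [linkOf_none T L h hA hB hC] at hx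
    simp at hx
  rintro (a | h) (b | h') hadj
  · exact Gbig_adj T G f hfT hadj
  · refine hlink h' a ?_
    rcases hadj with hs | hs | hs
    · exact Or.inl hs
    · exact Or.inr (Or.inl hs)
    · exact Or.inr (Or.inr hs)
  · refine hlink h b ?_
    rcases hadj with hs | hs | hs
    · exact Or.inr (Or.inl hs)
    · exact Or.inl hs
    · exact Or.inr (Or.inr hs)
  · rcases hadj with hs | hs | hs <;> simp [Gp] at hs
end BigTree
section BigTree2

open MixedGraph Sum

attribute [local instance] Classical.propDecidable

variable {m n : ℕ} {k NT : ℕ} (T : SimpleGraph (Fin NT)) (L : LinkPair m n)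
variable {N : ℕ} (G : MixedGraph m n (Fin N)) (f : Fin N ↪ Fin NT)

/-- Enumeration of the augmented vertex set. -/
noncomputable def sumEquiv (k : ℕ) (T : SimpleGraph (Fin NT)) :
    Fin (NT + Fintype.card (HelperIdx k T)) ≃ (Fin NT ⊕ HelperIdx k T) :=
  finSumFinEquiv.symm.trans
    (Equiv.sumCongr (Equiv.refl _) (Fintype.equivFin (HelperIdx k T)).symm)

lemma isKTree_Tp (hT : IsKTree k T) :
    IsKTree k ((Tp k T).comap (sumEquiv k T)) := by
  classical
  obtain ⟨hNT, eT, hbase, hstep⟩ := isKTree_elim (Fintype.card_fin NT) hT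
  set cH := Fintype.card (HelperIdx k T) with hcH
  set eH := Fintype.equivFin (HelperIdx k T) with heH
  have hle : NT ≤ NT + cH := Nat.le_add_right NT cH
  set E' : Fin (NT + cH) ≃ (Fin NT ⊕ HelperIdx k T) :=
    finSumFinEquiv.symm.trans (Equiv.sumCongr eT eH.symm) with hE'
  have hElt : ∀ (i : Fin (NT + cH)) (h : (i : ℕ) < NT), E' i = inl (eT ⟨(i : ℕ), h⟩) := by
    intro i h
    have hi : E' i = E' (Fin.castAdd cH ⟨(i : ℕ), h⟩) := congrArg E' (Fin.ext rfl)
    rw [hi, hE', Equiv.trans_apply, finSumFinEquiv_symm_apply_castAdd]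
    rfl
  have hEge : ∀ (i : Fin (NT + cH)) (h : NT ≤ (i : ℕ)),
      E' i = inr (eH.symm ⟨(i : ℕ) - NT, by omega⟩) := by
    intro i h
    have hi : E' i = E' (Fin.natAdd NT ⟨(i : ℕ) - NT, by omega⟩) :=
      congrArg E' (Fin.ext (by simp; omega))
    rw [hi, hE', Equiv.trans_apply, finSumFinEquiv_symm_apply_natAdd]
    rfl
  set embComp : Fin NT ↪ Fin (NT + cH) := (eT.symm.toEmbedding).trans (Fin.castLEEmb hle)
    with hembComp
  have hembVal : ∀ x : Fin NT, ((embComp x : Fin (NT + cH)) : ℕ) = ((eT.symm x : Fin NT) : ℕ) := by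
    intro x; simp [hembComp]
  have hEcomp : ∀ x : Fin NT, E' (embComp x) = inl x := by
    intro x
    rw [hElt _ (by rw [hembVal]; exact (eT.symm x).isLt)]
    congr 1
    have : (⟨((embComp x : Fin (NT + cH)) : ℕ), by rw [hembVal]; exact (eT.symm x).isLt⟩ : Fin NT)
        = eT.symm x := Fin.ext (by rw [hembVal])
    rw [this, Equiv.apply_symm_apply]
  have hAdj : ∀ i j : Fin (NT + cH),
      ((Tp k T).comap (sumEquiv k T)).Adj ((E'.trans (sumEquiv k T).symm) i)
        ((E'.trans (sumEquiv k T).symm) j) ↔ (Tp k T).Adj (E' i) (E' j) := by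
    intro i j
    show (Tp k T).Adj ((sumEquiv k T) ((sumEquiv k T).symm (E' i)))
      ((sumEquiv k T) ((sumEquiv k T).symm (E' j))) ↔ _
    rw [Equiv.apply_symm_apply, Equiv.apply_symm_apply]
  apply isKTree_mk _ (Fintype.card_fin _) (le_trans hNT hle) (E'.trans (sumEquiv k T).symm)
  · -- base clique
    intro i j hi hj hij
    rw [hAdj]
    have hiNT : (i : ℕ) < NT := lt_of_lt_of_le hi hNT
    have hjNT : (j : ℕ) < NT := lt_of_lt_of_le hj hNT
    rw [hElt i hiNT, hElt j hjNT]
    show T.Adj _ _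
    refine hbase _ _ hi hj (fun h : (⟨(i : ℕ), hiNT⟩ : Fin NT) = ⟨(j : ℕ), hjNT⟩ => hij ?_)
    have h2 : ((⟨(i : ℕ), hiNT⟩ : Fin NT) : ℕ) = ((⟨(j : ℕ), hjNT⟩ : Fin NT) : ℕ) :=
      congrArg Fin.val h
    exact Fin.ext h2
  · -- attachment cliques
    intro j hj
    by_cases hjNT : (j : ℕ) < NT
    · obtain ⟨S, hS1, hS2, hS3, hS4⟩ := hstep ⟨(j : ℕ), hjNT⟩ hj
      refine ⟨S.map (Fin.castLEEmb hle), by simp [hS1], ?_, ?_, ?_⟩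
      · intro a ha
        obtain ⟨b, hb, rfl⟩ := Finset.mem_map.mp ha
        have := hS2 b hb
        rw [Fin.lt_def] at this ⊢
        simpa using this
      · intro a ha b hb hab
        obtain ⟨a', ha', rfl⟩ := Finset.mem_map.mp ha
        obtain ⟨b', hb', rfl⟩ := Finset.mem_map.mp hb
        rw [hAdj]
        have hav : ((Fin.castLEEmb hle a' : Fin (NT + cH)) : ℕ) = (a' : ℕ) := by simp
        have hbv : ((Fin.castLEEmb hle b' : Fin (NT + cH)) : ℕ) = (b' : ℕ) := by simp
        rw [hElt _ (by rw [hav]; exact a'.isLt), hElt _ (by rw [hbv]; exact b'.isLt)]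
        show T.Adj _ _
        have ha2 : (⟨((Fin.castLEEmb hle a' : Fin (NT + cH)) : ℕ), by rw [hav]; exact a'.isLt⟩ : Fin NT) = a' :=
          Fin.ext (by rw [hav])
        have hb2 : (⟨((Fin.castLEEmb hle b' : Fin (NT + cH)) : ℕ), by rw [hbv]; exact b'.isLt⟩ : Fin NT) = b' :=
          Fin.ext (by rw [hbv])
        rw [ha2, hb2]
        refine hS3 a' ha' b' hb' (fun h => hab ?_)
        rw [h]
      · intro i hi
        have hiNT : (i : ℕ) < NT := lt_trans (Fin.lt_def.mp hi) hjNT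
        rw [hAdj, hElt i hiNT, hElt j hjNT]
        have hiff := hS4 ⟨(i : ℕ), hiNT⟩ (Fin.lt_def.mpr (Fin.lt_def.mp hi))
        constructor
        · intro hadj
          have hmem := hiff.mp hadj
          refine Finset.mem_map.mpr ⟨⟨(i : ℕ), hiNT⟩, hmem, Fin.ext (by simp)⟩
        · intro hmem
          obtain ⟨b, hb, hbe⟩ := Finset.mem_map.mp hmem
          have : b = (⟨(i : ℕ), hiNT⟩ : Fin NT) := Fin.ext (by
            have := congrArg Fin.val hbe
            simpa using this)
          rw [this] at hb
          exact hiff.mpr hb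
    · push_neg at hjNT
      set h' := eH.symm ⟨(j : ℕ) - NT, by omega⟩ with hh'
      refine ⟨(HelperIdx.S h').map embComp, ?_, ?_, ?_, ?_⟩
      · rw [Finset.card_map]; exact h'.card_S
      · intro a ha
        obtain ⟨x, hx, rfl⟩ := Finset.mem_map.mp ha
        rw [Fin.lt_def, hembVal]
        exact lt_of_lt_of_le (eT.symm x).isLt hjNT
      · intro a ha b hb hab
        obtain ⟨x, hx, rfl⟩ := Finset.mem_map.mp ha
        obtain ⟨y, hy, rfl⟩ := Finset.mem_map.mp hb
        rw [hAdj, hEcomp, hEcomp]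
        show T.Adj x y
        exact h'.clique_S x hx y hy (fun h => hab (by rw [h]))
      · intro i hi
        rw [hAdj, hEge j hjNT]
        by_cases hiNT : (i : ℕ) < NT
        · rw [hElt i hiNT]
          show eT ⟨(i : ℕ), hiNT⟩ ∈ HelperIdx.S h' ↔ _
          constructor
          · intro hmem
            refine Finset.mem_map.mpr ⟨eT ⟨(i : ℕ), hiNT⟩, hmem, Fin.ext ?_⟩
            rw [hembVal, Equiv.symm_apply_apply]
          · intro hmem
            obtain ⟨x, hx, hxe⟩ := Finset.mem_map.mp hmem
            have hval : ((eT.symm x : Fin NT) : ℕ) = (i : ℕ) := by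
              rw [← hembVal]; exact congrArg Fin.val hxe
            have : x = eT ⟨(i : ℕ), hiNT⟩ := by
              rw [← Equiv.apply_symm_apply eT x]
              congr 1
              exact Fin.ext hval
            rwa [this] at hx
        · push_neg at hiNT
          rw [hEge i hiNT]
          show False ↔ _
          constructor
          · intro h; exact h.elim
          · intro hmem
            obtain ⟨x, hx, hxe⟩ := Finset.mem_map.mp hmem
            have := congrArg Fin.val hxe
            rw [hembVal] at this
            have := (eT.symm x).isLt
            omega
end BigTree2
section Witness

open MixedGraph Sum

attribute [local instance] Classical.propDecidable

/-- Main construction: from any mixed graph `G` whose underlying graph is a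
partial `k`-tree, produce an augmented mixed graph `G₂`, still a partial
`k`-tree, such that any simple homomorphism of `G₂` yields an ordinary
homomorphism of `G` to the same target. -/
lemma bigWitness {m n k : ℕ} (L : LinkPair m n) (hk : 3 ≤ k) {N : ℕ}
    (G : MixedGraph m n (Fin N)) (hPT : IsPartialKTree k G.underlying) :
    ∃ (M : ℕ) (G₂ : MixedGraph m n (Fin M)), 2 ≤ M ∧
      IsPartialKTree k G₂.underlying ∧
      ∀ (t : ℕ) (Hgt : MixedGraph m n (Fin t)) (φ : Fin M → Fin t),
        G₂.IsSimpleHom Hgt φ → ∃ ψ : Fin N → Fin t, G.IsHom Hgt ψ := by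
  obtain ⟨NT, T, hT, f, hfT⟩ := hPT
  have hfT' : ∀ u v, G.Adj u v → T.Adj (f u) (f v) := hfT
  set M := NT + Fintype.card (HelperIdx k T) with hM
  set εs := sumEquiv k T with hεs
  refine ⟨M, (Gp (k := k) T L G f).comapE εs, ?_, ?_, ?_⟩
  · have := (isKTree_elim (Fintype.card_fin NT) hT).1
    omega
  · refine ⟨M, (Tp k T).comap εs, isKTree_Tp T hT, Function.Embedding.refl _, ?_⟩
    intro u v huv
    exact Gp_sub T L G f hfT' (εs u) (εs v) huv
  · intro t Hgt φ hφ
    obtain ⟨hc, ha, he⟩ := hφ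
    have hφ' : (Gp (k := k) T L G f).IsSimpleHom Hgt (fun v => φ (εs.symm v)) := by
      refine ⟨?_, ?_, ?_⟩
      · rcases hc with hc | ⟨x, y, hxy⟩
        · left
          rw [← Fintype.card_congr εs]
          exact hc
        · right
          exact ⟨εs x, εs y, by simpa using hxy⟩
      · intro u v j harc
        have h2 : ((Gp (k := k) T L G f).comapE εs).arcColor (εs.symm u) (εs.symm v) = some j := by
          show (Gp (k := k) T L G f).arcColor (εs (εs.symm u)) (εs (εs.symm v)) = some j
          rw [Equiv.apply_symm_apply, Equiv.apply_symm_apply]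
          exact harc
        exact ha _ _ j h2
      · intro u v i hedge
        have h2 : ((Gp (k := k) T L G f).comapE εs).edgeColor (εs.symm u) (εs.symm v) = some i := by
          show (Gp (k := k) T L G f).edgeColor (εs (εs.symm u)) (εs (εs.symm v)) = some i
          rw [Equiv.apply_symm_apply, Equiv.apply_symm_apply]
          exact hedge
        exact he _ _ i h2
    refine ⟨fun u => φ (εs.symm (inl (f u))), ?_, ?_, ?_⟩
    · intro u v huv heq
      exact collapse hφ' hk hT (hfT' u v huv) heq
    · intro u v j hj
      have h2 : (Gp (k := k) T L G f).arcColor (inl (f u)) (inl (f v)) = some j := by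
        rw [Gp_arc_inl]; exact hj
      rcases hφ'.2.1 _ _ j h2 with h | h
      · exfalso
        exact collapse hφ' hk hT
          (hfT' u v (Or.inl (Option.isSome_iff_exists.mpr ⟨j, hj⟩))) h
      · exact h
    · intro u v i hi
      have h2 : (Gp (k := k) T L G f).edgeColor (inl (f u)) (inl (f v)) = some i := by
        rw [Gp_edge_inl]; exact hi
      rcases hφ'.2.2 _ _ i h2 with h | h
      · exfalso
        exact collapse hφ' hk hT
          (hfT' u v (Or.inr (Or.inr (Option.isSome_iff_exists.mpr ⟨i, hi⟩)))) h
      · exact h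

end Witness
section Final

open MixedGraph

attribute [local instance] Classical.propDecidable

variable {m n : ℕ}

/-- The complete graph on `k+1` vertices is a `k`-tree. -/
lemma completeIsKTree (k : ℕ) : IsKTree k (⊤ : SimpleGraph (Fin (k + 1))) := by
  apply isKTree_mk _ (Fintype.card_fin _) le_rfl (Equiv.refl _)
  · intro i j hi hj hij
    exact hij
  · intro j hj
    exact absurd hj (by have := j.isLt; omega)

/-- Any graph on at most `k+1` vertices is a partial `k`-tree. -/
lemma partialKTree_small {NN k : ℕ} (hN : NN ≤ k + 1) (G' : SimpleGraph (Fin NN)) :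
    IsPartialKTree k G' :=
  ⟨k + 1, ⊤, completeIsKTree k, Fin.castLEEmb hN, fun u v huv => by
    simp only [SimpleGraph.top_adj]
    intro h
    exact G'.ne_of_adj huv (Fin.castLE_injective hN h)⟩

/-- A two-vertex witness with one adjacency. -/
def W2 (L : LinkPair m n) : MixedGraph m n (Fin 2) where
  arcColor x y := if x = 0 ∧ y = 1 then (L.d 0).1 else if x = 1 ∧ y = 0 then (L.d 0).2.1 else none
  edgeColor x y := if (x = 0 ∧ y = 1) ∨ (x = 1 ∧ y = 0) then (L.d 0).2.2 else none
  edge_symm x y := by fin_cases x <;> fin_cases y <;> simp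
  edge_irrefl x := by fin_cases x <;> simp
  arc_asymm x y h := by
    fin_cases x <;> fin_cases y <;> simp_all <;>
      first | exact (L.v1 0 h).1 | exact (L.v2 0 h).1
  arc_not_edge x y h := by
    fin_cases x <;> fin_cases y <;> simp_all <;>
      first | exact (L.v1 0 h).2 | exact (L.v2 0 h).2

lemma W2_adj (L : LinkPair m n) : (W2 L).Adj 0 1 := by
  rcases L.adj 0 with hs | hs | hs
  · exact Or.inl (by simp [W2]; exact hs)
  · exact Or.inr (Or.inl (by simp [W2]; exact hs))
  · exact Or.inr (Or.inr (by simp [W2]; exact hs))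

/-- identity is a simple homomorphism when there are at least two vertices. -/
lemma isSimpleHom_id {NN : ℕ} (hN : 2 ≤ NN) (G : MixedGraph m n (Fin NN)) :
    G.IsSimpleHom G id := by
  refine ⟨Or.inr ⟨⟨0, by omega⟩, ⟨1, by omega⟩, ?_⟩, fun u v j h => Or.inr h,
    fun u v i h => Or.inr h⟩
  simp only [id]
  intro h
  have := congrArg Fin.val h
  simp at this

/-- any mixed graph with an adjacency has chromatic number at least 2. -/
lemma chrom_two_le {NN : ℕ} (G : MixedGraph m n (Fin NN)) {u v : Fin NN}
    (h : G.Adj u v) : 2 ≤ G.chrom := by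
  have hne : {t : ℕ | ∃ H : MixedGraph m n (Fin t), ∃ φ : Fin NN → Fin t, G.IsHom H φ}.Nonempty :=
    ⟨NN, G, id, G.isHom_id⟩
  have hmem := Nat.sInf_mem hne
  obtain ⟨H, φ, hhom⟩ := hmem
  have hne2 : φ u ≠ φ v := hhom.1 u v h
  by_contra hlt
  push_neg at hlt
  unfold MixedGraph.chrom at hlt
  have hsub : Subsingleton
      (Fin (sInf {t : ℕ | ∃ H : MixedGraph m n (Fin t), ∃ φ : Fin NN → Fin t, G.IsHom H φ})) := by
    constructor
    intro a b
    have ha := a.isLt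
    have hb := b.isLt
    exact Fin.ext (by omega)
  exact hne2 (@Subsingleton.elim _ hsub (φ u) (φ v))

lemma chrom_le_card {NN : ℕ} (G : MixedGraph m n (Fin NN)) : G.chrom ≤ NN :=
  MixedGraph.chrom_le ⟨G, id, G.isHom_id⟩

end Final

/-- Fix `m, n` with `m + n ≥ 1` and `(m,n) ≠ (0,1)` and
`k ≥ 3`. The family of `(m,n)`-mixed graphs whose underlying graph is a partial
`k`-tree is optimally simply colourable: the supremum of the simple chromatic
numbers over the family equals the supremum of the chromatic numbers over the
family (in `ℕ∞`). -/
theorem stmt17 (m n k : ℕ) (hmn : 1 ≤ m + n) (hne : (m, n) ≠ (0, 1))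
    (hk : 3 ≤ k) :
    (⨆ (N : ℕ) (G : MixedGraph m n (Fin N))
        (_ : IsPartialKTree k G.underlying), (G.simpleChrom : ℕ∞)) =
    (⨆ (N : ℕ) (G : MixedGraph m n (Fin N))
        (_ : IsPartialKTree k G.underlying), (G.chrom : ℕ∞)) := by
  classical
  obtain ⟨L⟩ := linkPair_exists m n hmn hne
  have hW2PT : IsPartialKTree k (W2 (m := m) (n := n) L).underlying :=
    partialKTree_small (by omega) _
  apply le_antisymm
  · -- simple chromatic sup ≤ chromatic sup
    refine iSup_le fun N => iSup_le fun G => iSup_le fun hPT => ?_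
    by_cases hadj : ∃ u v : Fin N, G.Adj u v
    · obtain ⟨u, v, huv⟩ := hadj
      -- take an optimal homomorphism; it is simple
      have hmem := Nat.sInf_mem (⟨N, G, id, G.isHom_id⟩ :
        {t : ℕ | ∃ H : MixedGraph m n (Fin t), ∃ φ : Fin N → Fin t, G.IsHom H φ}.Nonempty)
      obtain ⟨H, φ, hhom⟩ := hmem
      have hsc : G.simpleChrom ≤ G.chrom := by
        apply MixedGraph.simpleChrom_le
        exact ⟨H, φ, Or.inr ⟨u, v, hhom.1 u v huv⟩,
          fun a b j h => Or.inr (hhom.2.1 a b j h),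
          fun a b i h => Or.inr (hhom.2.2 a b i h)⟩
      calc (G.simpleChrom : ℕ∞) ≤ (G.chrom : ℕ∞) := by exact_mod_cast hsc
        _ ≤ _ := by
          apply le_iSup_of_le N
          apply le_iSup_of_le G
          exact le_iSup (fun _ : IsPartialKTree k G.underlying => ((G.chrom : ℕ∞))) hPT
    · -- no adjacency: simple chromatic number is at most 2
      push_neg at hadj
      have hnoarc : ∀ u v : Fin N, G.arcColor u v = none := by
        intro u v
        by_contra hcon
        exact hadj u v (Or.inl (Option.ne_none_iff_isSome.mp hcon))
      have hnoedge : ∀ u v : Fin N, G.edgeColor u v = none := by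
        intro u v
        by_contra hcon
        exact hadj u v (Or.inr (Or.inr (Option.ne_none_iff_isSome.mp hcon)))
      have hsc : G.simpleChrom ≤ 2 := by
        rcases Nat.lt_or_ge N 1 with hN | hN
        · -- N = 0 : the defining set is empty
          have hN0 : N = 0 := by omega
          subst hN0
          have hempty : {t : ℕ | ∃ H : MixedGraph m n (Fin t),
              ∃ φ : Fin 0 → Fin t, G.IsSimpleHom H φ} = ∅ := by
            ext t
            simp only [Set.mem_setOf_eq, Set.mem_empty_iff_false, iff_false]
            rintro ⟨H, φ, hsh⟩
            rcases hsh.1 with hc1 | ⟨x, y, -⟩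
            · simp at hc1
            · exact x.elim0
          have : G.simpleChrom = 0 := by
            unfold MixedGraph.simpleChrom
            rw [hempty, Nat.sInf_empty]
          omega
        · rcases Nat.lt_or_ge N 2 with hN2 | hN2
          · -- N = 1
            have hN1 : N = 1 := by omega
            subst hN1
            refine le_trans (MixedGraph.simpleChrom_le (t := 1)
              ⟨MixedGraph.triv m n (Fin 1), fun _ => 0, Or.inl (by simp),
                fun u v j h => Or.inl rfl, fun u v i h => Or.inl rfl⟩) (by omega)
          · apply MixedGraph.simpleChrom_le (t := 2)
            refine ⟨MixedGraph.triv m n (Fin 2),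
              fun i => if (i : ℕ) = 0 then 0 else 1, Or.inr ⟨⟨0, by omega⟩, ⟨1, by omega⟩, by simp⟩, ?_, ?_⟩
            · intro u v j h; rw [hnoarc u v] at h; exact absurd h (by simp)
            · intro u v i h; rw [hnoedge u v] at h; exact absurd h (by simp)
      have h2 : (2 : ℕ∞) ≤ ⨆ (N : ℕ) (G : MixedGraph m n (Fin N))
          (_ : IsPartialKTree k G.underlying), (G.chrom : ℕ∞) := by
        have := chrom_two_le (W2 (m := m) (n := n) L) (W2_adj L)
        calc (2 : ℕ∞) ≤ ((W2 (m := m) (n := n) L).chrom : ℕ∞) := by exact_mod_cast this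
          _ ≤ _ := by
            apply le_iSup_of_le 2
            apply le_iSup_of_le (W2 (m := m) (n := n) L)
            exact le_iSup (fun _ : IsPartialKTree k (W2 (m := m) (n := n) L).underlying =>
              (((W2 (m := m) (n := n) L).chrom : ℕ∞))) hW2PT
      calc (G.simpleChrom : ℕ∞) ≤ (2 : ℕ∞) := by exact_mod_cast hsc
        _ ≤ _ := h2
  · -- chromatic sup ≤ simple chromatic sup
    refine iSup_le fun N => iSup_le fun G => iSup_le fun hPT => ?_
    obtain ⟨M, G₂, hM2, hPT₂, htrans⟩ := bigWitness L hk G hPT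
    have hmem := Nat.sInf_mem (⟨M, G₂, id, isSimpleHom_id hM2 G₂⟩ :
      {t : ℕ | ∃ H : MixedGraph m n (Fin t), ∃ φ : Fin M → Fin t, G₂.IsSimpleHom H φ}.Nonempty)
    obtain ⟨Hgt, φ, hφ⟩ := hmem
    obtain ⟨ψ, hψ⟩ := htrans _ Hgt φ hφ
    have hle : G.chrom ≤ G₂.simpleChrom := Nat.sInf_le ⟨Hgt, ψ, hψ⟩
    calc (G.chrom : ℕ∞) ≤ (G₂.simpleChrom : ℕ∞) := by exact_mod_cast hle
      _ ≤ _ := by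
        apply le_iSup_of_le M
        apply le_iSup_of_le G₂
        exact le_iSup (fun _ : IsPartialKTree k G₂.underlying => ((G₂.simpleChrom : ℕ∞))) hPT₂
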